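/- Fix B > 0, ν ∈ (0,1) and Δ ∈ (0,1). Define F(u_1, u_2, λ) = [1 + u_1 − λ − (B/2)(1+u_2)u_1^2 + (λ − u_1 − ν)Δ] · u_2/(u_2+1) for u_1 > 0, u_2 ≥ 0. Then for λ in the interval (λ_1, λ_2] with λ_1 = (1−νΔ)/(1−Δ) − (1−Δ)/(2B) and λ_2 = (1−νΔ)/(1−Δ) + (1−Δ)/(2B), the choice u_1 = (1−Δ)/(B(1+u_2)) with u_2 = [(1−Δ)^2 − 2B(λ−1−(λ−ν)Δ)]/[(1−Δ)^2 + 2B(λ−1−(λ−ν)Δ)] yields F(u_1, u_2, λ) = (B/(2(1−Δ)^2))·(1 − λ + (1−Δ)^2/(2B) + (λ−ν)Δ)^2, and this value is the maximum of F over u_1 > 0, u_2 ≥ 0. -/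

import Mathlib

/-- The function to optimize in the proof of Theorem `Thm-B-Cardinality`. -/
noncomputable def Fopt (B ν Δ u₁ u₂ lam : ℝ) : ℝ :=
  (1 + u₁ - lam - (B / 2) * (1 + u₂) * u₁ ^ 2 + (lam - u₁ - ν) * Δ) * (u₂ / (u₂ + 1))

/-! With `a = 1 - Δ` and `c = λ - 1 - (λ - ν)Δ` the bracket of `F` is `a u₁ - (B/2)(1 + u₂)u₁² - c`,
a concave quadratic in `u₁` whose maximum over `u₁` is `a²/(2B(1 + u₂)) - c`, attained at
`u₁ = a/(B(1 + u₂))`. In the variable `t = 1/(1 + u₂)` the factor `u₂/(u₂ + 1)` is `1 - t`, so the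
partially maximized `F` is again a concave quadratic, `(a²/(2B) + c) t - (a²/(2B)) t² - c`, and
its vertex `t = (a² + 2Bc)/(2a²)` gives the maximal value `(B/(2a²)) (a²/(2B) - c)²`. The vertex
is positive exactly when `λ > λ₁`. -/

theorem mul_sub_mul_sq_le (q x : ℝ) {p : ℝ} (hp : 0 < p) : q * x - p * x ^ 2 ≤ q ^ 2 / (4 * p) := by
  rw [le_div_iff₀ (by positivity)]
  nlinarith [sq_nonneg (2 * p * x - q)]

theorem mul_sub_mul_sq_vertex (q : ℝ) {p : ℝ} (hp : p ≠ 0) :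
    q * (q / (2 * p)) - p * (q / (2 * p)) ^ 2 = q ^ 2 / (4 * p) := by
  field_simp
  ring

theorem Fopt_eq (B ν Δ u₁ u₂ lam : ℝ) :
    Fopt B ν Δ u₁ u₂ lam =
      ((1 - Δ) * u₁ - B / 2 * (1 + u₂) * u₁ ^ 2 - (lam - 1 - (lam - ν) * Δ)) * (u₂ / (u₂ + 1)) := by
  unfold Fopt
  ring

section Maximization

variable {B a c u₂ : ℝ}

theorem bracket_le_max (hB : 0 < B) (hu₂ : -1 < u₂) (u₁ : ℝ) :
    a * u₁ - B / 2 * (1 + u₂) * u₁ ^ 2 - c ≤ a ^ 2 / (2 * B * (1 + u₂)) - c := by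
  have hu₂' : 0 < 1 + u₂ := by linarith
  have h := mul_sub_mul_sq_le a u₁ (p := B / 2 * (1 + u₂)) (by positivity)
  convert sub_le_sub_right h c using 2
  ring

theorem bracket_at_argmax (hB : B ≠ 0) (hu₂ : 1 + u₂ ≠ 0) :
    a * (a / (B * (1 + u₂))) - B / 2 * (1 + u₂) * (a / (B * (1 + u₂))) ^ 2 - c
      = a ^ 2 / (2 * B * (1 + u₂)) - c := by
  field_simp
  ring

theorem profile_eq_quadratic_in_inv (hu₂ : 1 + u₂ ≠ 0) :
    (a ^ 2 / (2 * B * (1 + u₂)) - c) * (u₂ / (u₂ + 1)) =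
      (a ^ 2 / (2 * B) + c) * (1 + u₂)⁻¹ - a ^ 2 / (2 * B) * (1 + u₂)⁻¹ ^ 2 - c := by
  have : u₂ + 1 ≠ 0 := by rwa [add_comm]
  field_simp
  ring

theorem profile_le_max (hB : 0 < B) (ha : a ≠ 0) (hu₂ : -1 < u₂) :
    (a ^ 2 / (2 * B * (1 + u₂)) - c) * (u₂ / (u₂ + 1)) ≤
      B / (2 * a ^ 2) * (a ^ 2 / (2 * B) - c) ^ 2 := by
  rw [profile_eq_quadratic_in_inv (by linarith)]
  calc _ ≤ (a ^ 2 / (2 * B) + c) ^ 2 / (4 * (a ^ 2 / (2 * B))) - c :=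
        sub_le_sub_right (mul_sub_mul_sq_le _ _ (by positivity)) c
    _ = _ := by field_simp; ring

theorem bracket_mul_at_argmax (hB : B ≠ 0) (ha : a ≠ 0) (hc : a ^ 2 + 2 * B * c ≠ 0) :
    let u₂ := (a ^ 2 - 2 * B * c) / (a ^ 2 + 2 * B * c)
    let u₁ := a / (B * (1 + u₂))
    (a * u₁ - B / 2 * (1 + u₂) * u₁ ^ 2 - c) * (u₂ / (u₂ + 1)) =
      B / (2 * a ^ 2) * (a ^ 2 / (2 * B) - c) ^ 2 := by
  intro u₂ u₁
  have h1 : 1 + u₂ = 2 * a ^ 2 / (a ^ 2 + 2 * B * c) := by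
    simp only [u₂]; field_simp; ring
  have h2 : 1 + u₂ ≠ 0 := by
    rw [h1]; exact div_ne_zero (by positivity) hc
  have h3 : (1 + u₂)⁻¹ = (a ^ 2 / (2 * B) + c) / (2 * (a ^ 2 / (2 * B))) := by
    rw [h1]; field_simp
  rw [bracket_at_argmax hB h2, profile_eq_quadratic_in_inv h2, h3,
    mul_sub_mul_sq_vertex _ (by positivity)]
  field_simp
  ring

end Maximization

theorem Fopt_max_general (B ν Δ lam : ℝ) (hB : 0 < B)
    (hΔ : Δ ∈ Set.Ioo (0 : ℝ) 1)
    (hlam : lam ∈ Set.Ioc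
      ((1 - ν * Δ) / (1 - Δ) - (1 - Δ) / (2 * B))
      ((1 - ν * Δ) / (1 - Δ) + (1 - Δ) / (2 * B))) :
    let u₂ := ((1 - Δ) ^ 2 - 2 * B * (lam - 1 - (lam - ν) * Δ)) /
              ((1 - Δ) ^ 2 + 2 * B * (lam - 1 - (lam - ν) * Δ))
    let u₁ := (1 - Δ) / (B * (1 + u₂))
    Fopt B ν Δ u₁ u₂ lam =
        (B / (2 * (1 - Δ) ^ 2)) * (1 - lam + (1 - Δ) ^ 2 / (2 * B) + (lam - ν) * Δ) ^ 2
      ∧ ∀ v₁ > (0 : ℝ), ∀ v₂ ≥ (0 : ℝ),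
          Fopt B ν Δ v₁ v₂ lam ≤
            (B / (2 * (1 - Δ) ^ 2)) * (1 - lam + (1 - Δ) ^ 2 / (2 * B) + (lam - ν) * Δ) ^ 2 := by
  intro u₂ u₁
  have ha : 0 < 1 - Δ := sub_pos.2 hΔ.2
  have hc : 0 < (1 - Δ) ^ 2 + 2 * B * (lam - 1 - (lam - ν) * Δ) := by
    have h := hlam.1
    rw [div_sub_div _ _ ha.ne' (by positivity), div_lt_iff₀ (by positivity)] at h
    linarith
  have hM : 1 - lam + (1 - Δ) ^ 2 / (2 * B) + (lam - ν) * Δ =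
      (1 - Δ) ^ 2 / (2 * B) - (lam - 1 - (lam - ν) * Δ) := by ring
  simp only [hM, Fopt_eq]
  refine ⟨?_, fun v₁ _ v₂ hv₂ => ?_⟩
  · exact bracket_mul_at_argmax hB.ne' ha.ne' hc.ne'
  · exact (mul_le_mul_of_nonneg_right (bracket_le_max hB (by linarith) v₁)
      (div_nonneg hv₂ (by linarith))).trans (profile_le_max hB ha.ne' (by linarith))

/-- Optimization step: for `λ ∈ (λ₁, λ₂]`, the stated choice of `u₁, u₂`
attains the maximal value `(B/(2(1−Δ)²))(1 − λ + (1−Δ)²/(2B) + (λ−ν)Δ)²` of `F`. -/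
theorem Fopt_max (B ν Δ lam : ℝ) (hB : 0 < B) (hν : ν ∈ Set.Ioo (0 : ℝ) 1)
    (hΔ : Δ ∈ Set.Ioo (0 : ℝ) 1)
    (hlam : lam ∈ Set.Ioc
      ((1 - ν * Δ) / (1 - Δ) - (1 - Δ) / (2 * B))
      ((1 - ν * Δ) / (1 - Δ) + (1 - Δ) / (2 * B))) :
    let u₂ := ((1 - Δ) ^ 2 - 2 * B * (lam - 1 - (lam - ν) * Δ)) /
              ((1 - Δ) ^ 2 + 2 * B * (lam - 1 - (lam - ν) * Δ))
    let u₁ := (1 - Δ) / (B * (1 + u₂))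
    Fopt B ν Δ u₁ u₂ lam =
        (B / (2 * (1 - Δ) ^ 2)) * (1 - lam + (1 - Δ) ^ 2 / (2 * B) + (lam - ν) * Δ) ^ 2
      ∧ ∀ v₁ > (0 : ℝ), ∀ v₂ ≥ (0 : ℝ),
          Fopt B ν Δ v₁ v₂ lam ≤
            (B / (2 * (1 - Δ) ^ 2)) * (1 - lam + (1 - Δ) ^ 2 / (2 * B) + (lam - ν) * Δ) ^ 2 :=
  Fopt_max_general B ν Δ lam hB hΔ hlam
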